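/- Let H = −Δ + q on L²(ℝ³) with q real-valued, smooth, compactly supported, and suppose χ ∈ L²(ℝ³) is a strictly positive eigenfunction of H with eigenvalue −k_0² < 0 decaying exponentially at infinity. Suppose Φ is a smooth bounded function satisfying (−Δ+q)Φ = 0 on ℝ³ and Φ(x) → 1 as |x| → ∞. Then Φ changes sign, i.e., there exists a point a ∈ ℝ³ with Φ(a) ≤ 0; in particular (by continuity and Φ → 1 at infinity) there is a ∈ ℝ³ with Φ(a) = 0. -/

import Mathlib

open MeasureTheory Real Filter

noncomputable section

abbrev E3 : Type := EuclideanSpace ℝ (Fin 3)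

def pd (i : Fin 3) (f : E3 → ℝ) : E3 → ℝ :=
  fun x => fderiv ℝ f x (EuclideanSpace.single i 1)

def lap (f : E3 → ℝ) : E3 → ℝ := fun x => ∑ i : Fin 3, pd i (pd i f) x

/-- Second derivative test: at a local minimum of a smooth function, `f'' ≥ 0`. -/
lemma second_deriv_nonneg_of_min {f : ℝ → ℝ} (hf : ContDiff ℝ (⊤ : ℕ∞) f) {a : ℝ}
    (hmin : IsLocalMin f a) : 0 ≤ deriv (deriv f) a := by
  by_contra h
  push_neg at h
  have hd1 : deriv f a = 0 := hmin.deriv_eq_zero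
  have hdf : ContDiff ℝ (⊤ : ℕ∞) (deriv f) :=
    (contDiff_infty_iff_deriv.mp (hf.of_le (by simp))).2
  have hdd : HasDerivAt (deriv f) (deriv (deriv f) a) a :=
    ((hdf.differentiable (by simp)) a).hasDerivAt
  have hslope : Tendsto (slope (deriv f) a) (nhdsWithin a {a}ᶜ) (nhds (deriv (deriv f) a)) :=
    hasDerivAt_iff_tendsto_slope.mp hdd
  have hneg : ∀ᶠ x in nhdsWithin a {a}ᶜ, slope (deriv f) a x < 0 :=
    hslope.eventually (gt_mem_nhds h)
  have hneg' : ∀ᶠ x in nhdsWithin a (Set.Ioi a), deriv f x < 0 := by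
    have := (nhdsWithin_mono a (by
      intro x hx
      exact ne_of_gt (Set.mem_Ioi.mp hx) : Set.Ioi a ⊆ {a}ᶜ)) hneg
    filter_upwards [this, self_mem_nhdsWithin] with x hx hx'
    have hxa : 0 < x - a := sub_pos.mpr hx'
    have hs : slope (deriv f) a x = deriv f x / (x - a) := by
      rw [slope_def_field, hd1, sub_zero]
    rw [hs] at hx
    by_contra hge
    push_neg at hge
    exact absurd (div_nonneg hge hxa.le) (not_le.mpr hx)
  obtain ⟨b, hb, hsub⟩ := mem_nhdsGT_iff_exists_Ioo_subset.mp hneg'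
  have hanti : StrictAntiOn f (Set.Icc a b) := by
    apply strictAntiOn_of_deriv_neg (convex_Icc a b) (hf.continuous.continuousOn)
    intro x hx
    rw [interior_Icc] at hx
    exact hsub hx
  have hmin' : ∀ᶠ x in nhdsWithin a (Set.Ioi a), f a ≤ f x :=
    nhdsWithin_le_nhds hmin
  have hIoo : ∀ᶠ x in nhdsWithin a (Set.Ioi a), x ∈ Set.Ioo a b :=
    Ioo_mem_nhdsGT_of_mem ⟨le_refl a, hb⟩
  obtain ⟨x, hx1, hx2⟩ := (hIoo.and hmin').exists
  have : f x < f a := hanti ⟨le_refl a, (Set.mem_Ioi.mp hb).le⟩ ⟨hx1.1.le, hx1.2.le⟩ hx1.1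
  linarith

lemma pd_contDiff {f : E3 → ℝ} (hf : ContDiff ℝ (⊤ : ℕ∞) f) (i : Fin 3) :
    ContDiff ℝ (⊤ : ℕ∞) (pd i f) := by
  have h1 : ContDiff ℝ (⊤ : ℕ∞) (fderiv ℝ f) := hf.fderiv_right (by simp)
  exact h1.clm_apply contDiff_const

lemma hasDerivAt_line {f : E3 → ℝ} (hf : Differentiable ℝ f) (x₀ v : E3) (t : ℝ) :
    HasDerivAt (fun s : ℝ => f (x₀ + s • v)) (fderiv ℝ f (x₀ + t • v) v) t := by
  have hline : HasDerivAt (fun s : ℝ => x₀ + s • v) v t := by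
    simpa using ((hasDerivAt_id t).smul_const v).const_add x₀
  exact ((hf (x₀ + t • v)).hasFDerivAt).comp_hasDerivAt t hline

/-- The Laplacian is nonnegative at a global minimum of a smooth function. -/
lemma lap_nonneg_of_min {f : E3 → ℝ} (hf : ContDiff ℝ (⊤ : ℕ∞) f) {x₀ : E3}
    (hmin : ∀ y, f x₀ ≤ f y) : 0 ≤ lap f x₀ := by
  unfold lap
  apply Finset.sum_nonneg
  intro i _
  set v := EuclideanSpace.single i (1 : ℝ) with hv
  set g : ℝ → ℝ := fun s => f (x₀ + s • v) with hg
  have hgs : ContDiff ℝ (⊤ : ℕ∞) g :=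
    hf.comp (contDiff_const.add (contDiff_id.smul contDiff_const))
  have hgmin : IsLocalMin g 0 := by
    apply Filter.Eventually.of_forall
    intro t
    simpa [hg] using hmin (x₀ + t • v)
  have key : 0 ≤ deriv (deriv g) 0 := second_deriv_nonneg_of_min hgs hgmin
  have h1 : deriv g = fun t => pd i f (x₀ + t • v) := by
    funext t
    exact (hasDerivAt_line (hf.differentiable (by simp)) x₀ v t).deriv
  have h2 : deriv (deriv g) 0 = pd i (pd i f) x₀ := by
    rw [h1]
    have := (hasDerivAt_line ((pd_contDiff hf i).differentiable (by simp)) x₀ v 0).deriv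
    simpa [pd] using this
  rw [h2] at key
  exact key

lemma pd_combo {f g : E3 → ℝ} (hf : Differentiable ℝ f) (hg : Differentiable ℝ g)
    (c : ℝ) (i : Fin 3) :
    pd i (fun x => c * f x - g x) = fun x => c * pd i f x - pd i g x := by
  funext x
  have h : fderiv ℝ (fun x => c * f x - g x) x = c • fderiv ℝ f x - fderiv ℝ g x := by
    rw [fderiv_fun_sub ((hf x).const_mul c) (hg x), fderiv_const_mul (hf x)]
  simp [pd, h]

lemma lap_combo {f g : E3 → ℝ} (hf : ContDiff ℝ (⊤ : ℕ∞) f) (hg : ContDiff ℝ (⊤ : ℕ∞) g)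
    (c : ℝ) (x : E3) :
    lap (fun y => c * f y - g y) x = c * lap f x - lap g x := by
  have h2 : ∀ i, pd i (pd i (fun y => c * f y - g y)) =
      fun y => c * pd i (pd i f) y - pd i (pd i g) y := by
    intro i
    rw [pd_combo (hf.differentiable (by simp)) (hg.differentiable (by simp)) c i]
    exact pd_combo ((pd_contDiff hf i).differentiable (by simp))
      ((pd_contDiff hg i).differentiable (by simp)) c i
  unfold lap
  simp only [fun i => congrFun (h2 i) x]
  rw [Finset.sum_sub_distrib, Finset.mul_sum]

/-- If `H = -Δ + q` has a strictly positive exponentially decaying eigenfunction `χ` with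
negative eigenvalue `-k₀²`, then any bounded solution `Φ` of `(-Δ+q)Φ = 0` with `Φ → 1`
at infinity must vanish somewhere. -/
theorem ground_state_forces_zero_of_Phi
    (q χ Φ : E3 → ℝ) (k₀ : ℝ) (hk₀ : k₀ ≠ 0)
    (hq : ContDiff ℝ (⊤ : ℕ∞) q) (hqc : HasCompactSupport q)
    (hχs : ContDiff ℝ (⊤ : ℕ∞) χ) (hχL2 : MemLp χ 2 volume)
    (hχpos : ∀ x, 0 < χ x)
    (hχdecay : ∃ C c : ℝ, 0 < C ∧ 0 < c ∧ ∀ x, |χ x| ≤ C * Real.exp (-c * ‖x‖))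
    (hχeig : ∀ x, - lap χ x + q x * χ x = -k₀^2 * χ x)
    (hΦs : ContDiff ℝ (⊤ : ℕ∞) Φ) (hΦb : ∃ M : ℝ, ∀ x, |Φ x| ≤ M)
    (hΦeq : ∀ x, - lap Φ x + q x * Φ x = 0)
    (hΦ1 : Tendsto Φ (cocompact E3) (nhds 1)) :
    (∃ a : E3, Φ a ≤ 0) ∧ (∃ a : E3, Φ a = 0) := by
  have h1 : ∃ a : E3, Φ a ≤ 0 := by
    by_contra hco
    push_neg at hco
    -- hco : ∀ a, 0 < Φ a
    set w : E3 → ℝ := fun x => χ x / Φ x with hw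
    have hwc : Continuous w :=
      hχs.continuous.div hΦs.continuous (fun x => (hco x).ne')
    -- χ → 0 at infinity
    obtain ⟨C, c, hC, hc, hdec⟩ := hχdecay
    have hχ0 : Tendsto χ (cocompact E3) (nhds 0) := by
      apply squeeze_zero_norm (fun x => hdec x)
      have hnorm : Tendsto (fun x : E3 => ‖x‖) (cocompact E3) atTop :=
        tendsto_norm_cocompact_atTop
      have : Tendsto (fun t : ℝ => C * Real.exp (-c * t)) atTop (nhds 0) := by
        have hlin : Tendsto (fun t : ℝ => -c * t) atTop atBot :=
          (tendsto_const_mul_atBot_of_neg (neg_neg_iff_pos.mpr hc)).mpr tendsto_id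
        have := Real.tendsto_exp_atBot.comp hlin
        simpa using this.const_mul C
      exact this.comp hnorm
    have hw0 : Tendsto w (cocompact E3) (nhds 0) := by
      have hinv : Tendsto (fun x => (Φ x)⁻¹) (cocompact E3) (nhds 1⁻¹) :=
        hΦ1.inv₀ one_ne_zero
      have := hχ0.mul hinv
      simpa [hw, div_eq_mul_inv] using this
    -- existence of the maximum
    have hptpos : 0 < w 0 := div_pos (hχpos 0) (hco 0)
    have hev : ∀ᶠ x in cocompact E3, w x ≤ w 0 :=
      (hw0.eventually (gt_mem_nhds hptpos)).mono fun x hx => hx.le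
    obtain ⟨x₀, hx₀⟩ := hwc.exists_forall_ge' (0 : E3) hev
    set m : ℝ := w x₀ with hm
    have hmpos : 0 < m := lt_of_lt_of_le hptpos (hx₀ 0)
    have hle : ∀ y, χ y ≤ m * Φ y := fun y =>
      (div_le_iff₀ (hco y)).mp (hx₀ y)
    have heq : χ x₀ = m * Φ x₀ := by
      have : m = χ x₀ / Φ x₀ := rfl
      rw [this, div_mul_cancel₀ _ (hco x₀).ne']
    set ψ : E3 → ℝ := fun x => m * Φ x - χ x with hψ
    have hψs : ContDiff ℝ (⊤ : ℕ∞) ψ := (contDiff_const.mul hΦs).sub hχs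
    have hψmin : ∀ y, ψ x₀ ≤ ψ y := by
      intro y
      have h0 : ψ x₀ = 0 := by simp [hψ, heq]
      rw [h0]
      exact sub_nonneg.mpr (hle y)
    have hlap_nonneg : 0 ≤ lap ψ x₀ := lap_nonneg_of_min hψs hψmin
    have hlap_eq : lap ψ x₀ = m * lap Φ x₀ - lap χ x₀ := lap_combo hΦs hχs m x₀
    have hΦl : lap Φ x₀ = q x₀ * Φ x₀ := by have := hΦeq x₀; linarith
    have hχl : lap χ x₀ = q x₀ * χ x₀ + k₀ ^ 2 * χ x₀ := by have := hχeig x₀; linarith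
    have hlap_neg : lap ψ x₀ = -k₀ ^ 2 * χ x₀ := by
      rw [hlap_eq, hΦl, hχl]
      have h0 : m * Φ x₀ - χ x₀ = 0 := by linarith [heq]
      linear_combination q x₀ * h0
    have hk2 : 0 < k₀ ^ 2 := lt_of_le_of_ne (sq_nonneg k₀) (Ne.symm (pow_ne_zero 2 hk₀))
    nlinarith [hχpos x₀, hk2, mul_pos hk2 (hχpos x₀), hlap_nonneg, hlap_neg]
  obtain ⟨a, ha⟩ := h1
  refine ⟨⟨a, ha⟩, ?_⟩
  -- find a point where Φ > 0
  have hb : ∃ b : E3, 0 ≤ Φ b := by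
    have : ∀ᶠ x in cocompact E3, (0 : ℝ) < Φ x :=
      hΦ1.eventually (eventually_gt_nhds one_pos)
    obtain ⟨b, hb⟩ := this.exists
    exact ⟨b, hb.le⟩
  obtain ⟨b, hb⟩ := hb
  have hivt := intermediate_value_univ (f := Φ) a b hΦs.continuous
  obtain ⟨c', hc'⟩ := hivt ⟨ha, hb⟩
  exact ⟨c', hc'⟩

end
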